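/- Let E be a complex Banach space and let p be an ℝ-submodule of E such that every x ∈ E can be written as x = a + i•b with a, b ∈ p. Let U ⊆ E be an open connected set with U ∩ p ≠ ∅, and let f : E → ℂ be analytic on U. If f(x) = 0 for every x ∈ U ∩ p, then f(x) = 0 for every x ∈ U. -/

import Mathlib

/-!
Near a point `z₀ ∈ U ∩ p`, any `x` can be written `x = z₀ + a + i • b` with `a, b ∈ p`, so `x` lies
on the complex plane `(s, t) ↦ z₀ + s • a + t • b`, whose real points lie in `p`. An analytic
function of two complex variables vanishing at the real points of a connected open set vanishes
on it: fix one real variable and apply the one-variable identity theorem in the other, then swap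
roles. Hence `f` vanishes near `z₀`, and the identity theorem on `U` finishes.
-/

open Complex Filter Metric Set Topology

theorem AnalyticOnNhd.eqOn_zero_of_ofReal {g : ℂ → ℂ} {U : Set ℂ} (hg : AnalyticOnNhd ℂ g U)
    (hU : IsOpen U) (hUc : IsPreconnected U) {x₀ : ℝ} (hx₀ : (x₀ : ℂ) ∈ U)
    (hreal : ∀ t : ℝ, (t : ℂ) ∈ U → g t = 0) : EqOn g 0 U := by
  refine hg.eqOn_zero_of_preconnected_of_frequently_eq_zero hUc hx₀ ?_
  have hlim : Tendsto ((↑) : ℝ → ℂ) (𝓝[≠] x₀) (𝓝[≠] (x₀ : ℂ)) :=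
    continuous_ofReal.continuousWithinAt.tendsto_nhdsWithin fun t ht => by
      simpa using ht
  have hmem : ∀ᶠ t : ℝ in 𝓝[≠] x₀, (t : ℂ) ∈ U :=
    (continuous_ofReal.continuousAt.eventually_mem (hU.mem_nhds hx₀)).filter_mono
      nhdsWithin_le_nhds
  exact hlim.frequently (hmem.frequently.mono hreal)

theorem AnalyticOnNhd.eqOn_zero_prod_of_ofReal {G : ℂ × ℂ → ℂ} {U V : Set ℂ}
    (hG : AnalyticOnNhd ℂ G (U ×ˢ V)) (hU : IsOpen U) (hUc : IsPreconnected U) (hV : IsOpen V)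
    (hVc : IsPreconnected V) {x₀ y₀ : ℝ} (hx₀ : (x₀ : ℂ) ∈ U) (hy₀ : (y₀ : ℂ) ∈ V)
    (hreal : ∀ s t : ℝ, (s : ℂ) ∈ U → (t : ℂ) ∈ V → G (s, t) = 0) : EqOn G 0 (U ×ˢ V) := by
  have hslice_snd : ∀ s ∈ U, AnalyticOnNhd ℂ (fun t => G (s, t)) V := fun s hs t ht =>
    (hG (s, t) ⟨hs, ht⟩).comp (analyticAt_const.prod analyticAt_id)
  have hslice_fst : ∀ t ∈ V, AnalyticOnNhd ℂ (fun s => G (s, t)) U := fun t ht s hs =>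
    (hG (s, t) ⟨hs, ht⟩).comp (f := (·, t)) (analyticAt_id.prod analyticAt_const)
  have hreal_fst : ∀ s : ℝ, (s : ℂ) ∈ U → EqOn (fun t => G (s, t)) 0 V := fun s hs =>
    (hslice_snd s hs).eqOn_zero_of_ofReal hV hVc hy₀ fun t ht => hreal s t hs ht
  rintro ⟨s, t⟩ ⟨hs, ht⟩
  exact (hslice_fst t ht).eqOn_zero_of_ofReal hU hUc hx₀ (fun s' hs' => hreal_fst s' hs' ht) hs

theorem AnalyticOnNhd.eqOn_zero_of_ofReal_prod {G : ℂ × ℂ → ℂ} {S : Set (ℂ × ℂ)}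
    (hG : AnalyticOnNhd ℂ G S) (hS : IsOpen S) (hSc : IsPreconnected S) {x₀ y₀ : ℝ}
    (h₀ : ((x₀ : ℂ), (y₀ : ℂ)) ∈ S) (hreal : ∀ s t : ℝ, ((s : ℂ), (t : ℂ)) ∈ S → G (s, t) = 0) :
    EqOn G 0 S := by
  obtain ⟨ε, hε, hball⟩ := isOpen_iff.1 hS _ h₀
  rw [← ball_prod_same] at hball
  have hzero : EqOn G 0 (ball (x₀ : ℂ) ε ×ˢ ball (y₀ : ℂ) ε) :=
    (hG.mono hball).eqOn_zero_prod_of_ofReal isOpen_ball (convex_ball _ _).isPreconnected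
      isOpen_ball (convex_ball _ _).isPreconnected (mem_ball_self hε) (mem_ball_self hε)
      fun s t hs ht => hreal s t (hball ⟨hs, ht⟩)
  refine hG.eqOn_zero_of_preconnected_of_eventuallyEq_zero hSc h₀ ?_
  filter_upwards [prod_mem_nhds (ball_mem_nhds _ hε) (ball_mem_nhds _ hε)] using hzero

theorem AnalyticOnNhd.apply_eq_zero_of_eq_zero_on_real_plane {E : Type*} [NormedAddCommGroup E]
    [NormedSpace ℂ E] {f : E → ℂ} {s : Set E} (hf : AnalyticOnNhd ℂ f s) (hs : IsOpen s)
    (hsc : Convex ℝ s) {z₀ a b : E} (hz₀ : z₀ ∈ s)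
    (hreal : ∀ x y : ℝ, z₀ + x • a + y • b ∈ s → f (z₀ + x • a + y • b) = 0)
    (hab : z₀ + a + I • b ∈ s) : f (z₀ + a + I • b) = 0 := by
  let ℓ : ℂ × ℂ →L[ℂ] E :=
    (ContinuousLinearMap.fst ℂ ℂ ℂ).smulRight a + (ContinuousLinearMap.snd ℂ ℂ ℂ).smulRight b
  have hℓ : ∀ q, z₀ + ℓ q = z₀ + q.1 • a + q.2 • b := fun q => (add_assoc _ _ _).symm
  have hG : AnalyticOnNhd ℂ (fun q => f (z₀ + ℓ q)) ((z₀ + ℓ ·) ⁻¹' s) := fun q hq =>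
    (hf _ hq).comp (f := (z₀ + ℓ ·)) (analyticAt_const.add (ℓ.analyticAt q))
  have hconv : Convex ℝ ((z₀ + ℓ ·) ⁻¹' s) :=
    (hsc.translate_preimage_right z₀).linear_preimage (ℓ.toLinearMap.restrictScalars ℝ)
  have h₀ : ((0 : ℂ), (0 : ℂ)) ∈ (z₀ + ℓ ·) ⁻¹' s := by
    simpa only [mem_preimage, hℓ, zero_smul, add_zero] using hz₀
  have hzero := hG.eqOn_zero_of_ofReal_prod (hs.preimage (by fun_prop)) hconv.isPreconnected
    (x₀ := 0) (y₀ := 0) (by simpa only [ofReal_zero] using h₀) fun x y hxy => by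
      simpa only [hℓ, coe_smul] using
        hreal x y (by simpa only [mem_preimage, hℓ, coe_smul] using hxy)
  simpa only [hℓ, one_smul, Pi.zero_apply] using
    hzero (x := (1, I)) (by simpa only [mem_preimage, hℓ, one_smul] using hab)

theorem analytic_vanish_on_real_subspace
    (E : Type*) [NormedAddCommGroup E] [NormedSpace ℂ E]
    (p : Submodule ℝ E)
    (hspan : ∀ x : E, ∃ a b : E, a ∈ p ∧ b ∈ p ∧ x = a + (Complex.I : ℂ) • b)
    (U : Set E) (hU : IsOpen U) (hUconn : IsConnected U)
    (hne : (U ∩ (p : Set E)).Nonempty)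
    (f : E → ℂ) (hf : AnalyticOnNhd ℂ f U)
    (hvanish : ∀ x ∈ U ∩ (p : Set E), f x = 0) :
    ∀ x ∈ U, f x = 0 := by
  obtain ⟨z₀, hz₀U, hz₀p⟩ := hne
  obtain ⟨r, hr, hball⟩ := isOpen_iff.1 hU z₀ hz₀U
  have hlocal : ∀ x ∈ ball z₀ r, f x = 0 := by
    intro x hx
    obtain ⟨a, b, ha, hb, hab⟩ := hspan (x - z₀)
    have hx_eq : x = z₀ + a + I • b := by rw [add_assoc, ← hab, add_sub_cancel]
    subst hx_eq
    refine (hf.mono hball).apply_eq_zero_of_eq_zero_on_real_plane isOpen_ball (convex_ball _ _)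
      (mem_ball_self hr) (fun s t hst => hvanish _ ⟨hball hst, ?_⟩) hx
    exact p.add_mem (p.add_mem hz₀p (p.smul_mem s ha)) (p.smul_mem t hb)
  intro x hx
  exact hf.eqOn_zero_of_preconnected_of_eventuallyEq_zero hUconn.isPreconnected hz₀U
    (eventually_of_mem (ball_mem_nhds z₀ hr) hlocal) hx
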